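/- Let F be a strategyproof 2-facility mechanism on the line with approximation ratio at most ρ. If x is an (i|j,k)-well-separated instance with F_2(x) = x_j, then for every (i|j,k)-well-separated instance x' = (x_i, x'_j, x'_k) with x_j ≤ x'_j, it holds that F_2(x') = x'_j. -/

import Mathlib

noncomputable section

/-- Cost of an agent at location `a` under a pair of facilities. -/
def fcost (a : ℝ) (y : ℝ × ℝ) : ℝ := min |a - y.1| |a - y.2|

/-- Social cost: sum of the agents' distances to their nearest facility. -/
def scost {n : ℕ} (x : Fin n → ℝ) (y : ℝ × ℝ) : ℝ := ∑ i, fcost (x i) y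

/-- Optimal social cost over all placements of two facilities. -/
def optCost {n : ℕ} (x : Fin n → ℝ) : ℝ := ⨅ y : ℝ × ℝ, scost x y

/-- The mechanism outputs its facilities in increasing order. -/
def Ordered {n : ℕ} (F : (Fin n → ℝ) → ℝ × ℝ) : Prop := ∀ x, (F x).1 ≤ (F x).2

/-- No agent can strictly decrease her cost by misreporting her location. -/
def Strategyproof {n : ℕ} (F : (Fin n → ℝ) → ℝ × ℝ) : Prop :=
  ∀ (x : Fin n → ℝ) (i : Fin n) (y : ℝ),
    fcost (x i) (F x) ≤ fcost (x i) (F (Function.update x i y))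

/-- `F` has approximation ratio (at most) `ρ` for the social cost. -/
def ApproxRatio {n : ℕ} (F : (Fin n → ℝ) → ℝ × ℝ) (ρ : ℝ) : Prop :=
  ∀ x, scost x (F x) ≤ ρ * optCost x

/-- An `(i|j,k)`-well-separated 3-agent instance. -/
def WellSep (ρ : ℝ) (x : Fin 3 → ℝ) (i j k : Fin 3) : Prop :=
  x i < x j ∧ x j < x k ∧ ρ * (x k - x j) < x j - x i

/-!
Keep agent `i` at `a`; a well-separated instance is then a pair `a < y < z` with
`ρ (z - y) < y - a`, and the mechanism becomes a function `G y z`. The approximation bound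
forces the middle agent to be served by the right facility, which lies in `[y, z]`.
Strategyproofness of the right agent spreads `(G y z).2 = y` from `z` to every `z'` with
`z' - y < 2 (z - y)`; strategyproofness of the middle agent spreads a right facility at
`Q > y` from `y` to every `y' > 2 y - Q`, which would carry it down to an instance where the
facility is known to sit at the middle agent. All these moves have step sizes bounded from
below, so finitely many of them reach any target instance.
-/

open Function

theorem forall_ge_of_uniform_step {P : ℝ → Prop} {t₀ ε : ℝ} (hε : 0 < ε) (h₀ : P t₀)
    (hstep : ∀ t s, t₀ ≤ t → t ≤ s → s < t + ε → P t → P s) : ∀ s, t₀ ≤ s → P s := by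
  have hreach : ∀ n : ℕ, ∀ s, t₀ ≤ s → s ≤ t₀ + n * (ε / 2) → P s := by
    intro n
    induction n with
    | zero =>
      intro s hs hs'
      rwa [show s = t₀ by simp only [CharP.cast_eq_zero, zero_mul, add_zero] at hs'; linarith]
    | succ n ih =>
      intro s hs hs'
      rcases le_or_gt s (t₀ + n * (ε / 2)) with hle | hlt
      · exact ih s hs hle
      · have hn : (0 : ℝ) ≤ n * (ε / 2) := by positivity
        push_cast at hs'
        exact hstep _ s (by linarith) hlt.le (by linarith) (ih _ (by linarith) le_rfl)
  intro s hs
  obtain ⟨n, hn⟩ := exists_nat_ge ((s - t₀) / (ε / 2))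
  rw [div_le_iff₀ (by positivity)] at hn
  exact hreach n s hs (by linarith)

lemma fcost_nonneg (t : ℝ) (p : ℝ × ℝ) : 0 ≤ fcost t p :=
  le_min (abs_nonneg _) (abs_nonneg _)

lemma fcost_le_abs_sub_snd (t : ℝ) (p : ℝ × ℝ) : fcost t p ≤ |t - p.2| :=
  min_le_right _ _

lemma fcost_fst_self (u v : ℝ) : fcost u (u, v) = 0 := by
  simp [fcost]

lemma fcost_snd_self (u v : ℝ) : fcost v (u, v) = 0 := by
  simp [fcost]

lemma fcost_le_fcost_add_abs_sub (t s : ℝ) (p : ℝ × ℝ) : fcost t p ≤ fcost s p + |t - s| := by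
  unfold fcost
  rcases min_choice |s - p.1| |s - p.2| with h | h <;> rw [h]
  · exact (min_le_left _ _).trans ((abs_sub_le t s p.1).trans_eq (add_comm _ _))
  · exact (min_le_right _ _).trans ((abs_sub_le t s p.2).trans_eq (add_comm _ _))

lemma scost_nonneg {n : ℕ} (x : Fin n → ℝ) (p : ℝ × ℝ) : 0 ≤ scost x p :=
  Finset.sum_nonneg fun _ _ => fcost_nonneg _ _

lemma optCost_le_scost {n : ℕ} (x : Fin n → ℝ) (p : ℝ × ℝ) : optCost x ≤ scost x p :=
  ciInf_le ⟨0, by rintro _ ⟨q, rfl⟩; exact scost_nonneg x q⟩ p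

lemma ApproxRatio.scost_le {n : ℕ} {F : (Fin n → ℝ) → ℝ × ℝ} {ρ : ℝ} (happ : ApproxRatio F ρ)
    (hρ : 0 ≤ ρ) (x : Fin n → ℝ) (p : ℝ × ℝ) : scost x (F x) ≤ ρ * scost x p :=
  (happ x).trans (mul_le_mul_of_nonneg_left (optCost_le_scost x p) hρ)

lemma Fin.sum_univ_three_of_ne {M : Type*} [AddCommMonoid M] (f : Fin 3 → M) {i j k : Fin 3}
    (hij : i ≠ j) (hik : i ≠ k) (hjk : j ≠ k) : ∑ t, f t = f i + f j + f k := by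
  fin_cases i <;> fin_cases j <;> fin_cases k <;> simp_all [Fin.sum_univ_three] <;> abel

def WellSeparated (ρ a y z : ℝ) : Prop :=
  a < y ∧ y < z ∧ ρ * (z - y) < y - a

namespace WellSeparated

variable {ρ a y z : ℝ}

lemma of_le_left (h : WellSeparated ρ a y z) (hρ : 0 ≤ ρ) {y' : ℝ} (hy : y ≤ y') (hy' : y' < z) :
    WellSeparated ρ a y' z :=
  ⟨h.1.trans_le hy, hy', by nlinarith [h.2.2]⟩

lemma of_le_right (h : WellSeparated ρ a y z) (hρ : 0 ≤ ρ) {z' : ℝ} (hz' : y < z') (hz : z' ≤ z) :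
    WellSeparated ρ a y z' :=
  ⟨h.1, hz', by nlinarith [h.2.2]⟩

end WellSeparated

/-- What `fun y z ↦ F (x with j ↦ y, k ↦ z)` inherits from `F` when agent `i` sits at `a`. -/
structure IsMechanismSlice (a ρ : ℝ) (G : ℝ → ℝ → ℝ × ℝ) : Prop where
  ordered : ∀ y z, (G y z).1 ≤ (G y z).2
  strategyproof_mid : ∀ y z y', fcost y (G y z) ≤ fcost y (G y' z)
  strategyproof_right : ∀ y z z', fcost z (G y z) ≤ fcost z (G y z')
  approx : ∀ y z p, fcost a (G y z) + fcost y (G y z) + fcost z (G y z) ≤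
    ρ * (fcost a p + fcost y p + fcost z p)

namespace IsMechanismSlice

variable {a ρ : ℝ} {G : ℝ → ℝ → ℝ × ℝ}

lemma fcost_diag (hG : IsMechanismSlice a ρ G) (y : ℝ) : fcost y (G y y) = 0 := by
  have h := hG.approx y y (a, y)
  rw [fcost_fst_self, fcost_snd_self, add_zero, add_zero, mul_zero] at h
  linarith [fcost_nonneg a (G y y), fcost_nonneg y (G y y)]

lemma le_snd (hG : IsMechanismSlice a ρ G) {y z : ℝ} (hyz : y ≤ z) : y ≤ (G y z).2 := by
  have hk : fcost z (G y z) ≤ z - y := calc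
    fcost z (G y z) ≤ fcost z (G y y) := hG.strategyproof_right y z y
    _ ≤ fcost y (G y y) + |z - y| := fcost_le_fcost_add_abs_sub z y _
    _ = z - y := by rw [hG.fcost_diag, zero_add, abs_of_nonneg (sub_nonneg.2 hyz)]
  rcases min_le_iff.1 hk with h | h
  · linarith [le_abs_self (z - (G y z).1), hG.ordered y z]
  · linarith [le_abs_self (z - (G y z).2)]

lemma fcost_mid (hG : IsMechanismSlice a ρ G) (hρ : 0 ≤ ρ) {y z : ℝ} (hs : WellSeparated ρ a y z) :
    fcost y (G y z) = (G y z).2 - y := by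
  obtain ⟨hay, hyz, hsep⟩ := hs
  set p := G y z with hp
  have hq : y ≤ p.2 := hG.le_snd hyz.le
  have habs : |y - p.2| = p.2 - y := by rw [abs_sub_comm, abs_of_nonneg (sub_nonneg.2 hq)]
  have htotal : fcost a p + fcost y p + fcost z p < y - a := calc
    _ ≤ ρ * (fcost a (a, y) + fcost y (a, y) + fcost z (a, y)) := hG.approx y z (a, y)
    _ ≤ ρ * (z - y) := by
      rw [fcost_fst_self, fcost_snd_self, zero_add, zero_add]
      refine mul_le_mul_of_nonneg_left ((fcost_le_abs_sub_snd _ _).trans_eq ?_) hρ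
      exact abs_of_pos (sub_pos.2 hyz)
    _ < y - a := hsep
  refine le_antisymm (habs ▸ fcost_le_abs_sub_snd y p) (not_lt.1 fun hlt => ?_)
  have hy1 : fcost y p = |y - p.1| :=
    (min_choice _ _).resolve_right fun h => by rw [fcost, h, habs] at hlt; exact hlt.false
  -- with `y` served by the left facility, `a` and `y` together pay at least `y - a`
  have hay_cost : y - a ≤ fcost a p + fcost y p := by
    rcases min_choice |a - p.1| |a - p.2| with h | h
    · have ha : fcost a p = |a - p.1| := h
      rw [ha, hy1, ← abs_of_pos (sub_pos.2 hay)]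
      linarith [abs_sub_le y p.1 a, abs_sub_comm a p.1]
    · have ha : fcost a p = |a - p.2| := h
      linarith [neg_abs_le (a - p.2), fcost_nonneg y p]
  linarith [fcost_nonneg z p]

lemma snd_le (hG : IsMechanismSlice a ρ G) (hρ : 0 ≤ ρ) {y z : ℝ} (hs : WellSeparated ρ a y z) :
    (G y z).2 ≤ z := by
  have hj : (G y z).2 - y ≤ z - y := calc
    (G y z).2 - y = fcost y (G y z) := (hG.fcost_mid hρ hs).symm
    _ ≤ fcost y (G z z) := hG.strategyproof_mid y z z
    _ ≤ fcost z (G z z) + |y - z| := fcost_le_fcost_add_abs_sub y z _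
    _ = z - y := by rw [hG.fcost_diag, zero_add, abs_sub_comm, abs_of_pos (sub_pos.2 hs.2.1)]
  linarith

lemma snd_eq_of_lt_two_mul (hG : IsMechanismSlice a ρ G) (hρ : 0 ≤ ρ) {y w z : ℝ}
    (hw : WellSeparated ρ a y w) (hz : WellSeparated ρ a y z) (hq : (G y w).2 = y)
    (hzw : z - y < 2 * (w - y)) : (G y z).2 = y := by
  have hcost : fcost w (G y w) = w - y := by
    have h₁ : (G y w).1 ≤ y := (hG.ordered y w).trans_eq hq
    rw [fcost, hq, abs_of_pos (sub_pos.2 hw.2.1), abs_of_pos (by linarith [hw.2.1])]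
    exact min_eq_right (by linarith)
  have hk : w - y ≤ |w - (G y z).2| := calc
    w - y = fcost w (G y w) := hcost.symm
    _ ≤ fcost w (G y z) := hG.strategyproof_right y w z
    _ ≤ |w - (G y z).2| := fcost_le_abs_sub_snd _ _
  have hle := hG.le_snd hz.2.1.le
  have hge := hG.snd_le hρ hz
  refine eq_of_le_of_not_lt' hle fun hlt => hk.not_gt (abs_sub_lt_iff.2 ⟨?_, ?_⟩)
    <;> linarith

lemma snd_eq_of_separated (hG : IsMechanismSlice a ρ G) (hρ : 0 ≤ ρ) {y z₀ z : ℝ}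
    (hz₀ : WellSeparated ρ a y z₀) (hq₀ : (G y z₀).2 = y) (hz : WellSeparated ρ a y z) :
    (G y z).2 = y := by
  rcases lt_or_ge z z₀ with hlt | hge
  · exact hG.snd_eq_of_lt_two_mul hρ hz₀ hz hq₀ (by linarith [hz₀.2.1])
  refine forall_ge_of_uniform_step (P := fun w => WellSeparated ρ a y w → (G y w).2 = y)
    (sub_pos.2 hz₀.2.1) (fun _ => hq₀) ?_ z hge hz
  intro w w' hw hww' hw'lt hPw hw'
  have hsw : WellSeparated ρ a y w := hw'.of_le_right hρ (hz₀.2.1.trans_le hw) hww'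
  exact hG.snd_eq_of_lt_two_mul hρ hsw hw' (hPw hsw) (by linarith)

lemma snd_le_snd_of_lt (hG : IsMechanismSlice a ρ G) (hρ : 0 ≤ ρ) {y y' z : ℝ}
    (hs : WellSeparated ρ a y z) (hs' : WellSeparated ρ a y' z) (hy' : 2 * y - (G y z).2 < y') :
    (G y z).2 ≤ (G y' z).2 := by
  have hj : (G y z).2 - y ≤ |y - (G y' z).2| := calc
    (G y z).2 - y = fcost y (G y z) := (hG.fcost_mid hρ hs).symm
    _ ≤ fcost y (G y' z) := hG.strategyproof_mid y z y'
    _ ≤ |y - (G y' z).2| := fcost_le_abs_sub_snd _ _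
  have hle := hG.le_snd hs'.2.1.le
  refine not_lt.1 fun hlt => hj.not_gt (abs_sub_lt_iff.2 ⟨?_, ?_⟩) <;> linarith

lemma snd_eq_of_le_of_snd_eq (hG : IsMechanismSlice a ρ G) (hρ : 0 ≤ ρ) {y₀ y z : ℝ}
    (hs₀ : WellSeparated ρ a y₀ z) (hq₀ : (G y₀ z).2 = y₀) (hy : y₀ ≤ y) (hyz : y < z) :
    (G y z).2 = y := by
  set Q := (G y z).2
  have hyQ : y ≤ Q := hG.le_snd hyz.le
  refine eq_of_le_of_not_lt' hyQ fun hlt => ?_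
  have hspread : ∀ t, Q - y ≤ t → y₀ ≤ Q - t → Q ≤ (G (Q - t) z).2 := by
    refine forall_ge_of_uniform_step (sub_pos.2 hlt) (fun _ => by rw [sub_sub_cancel]) ?_
    intro t s ht hts hst hPt hs
    have hsep_t : WellSeparated ρ a (Q - t) z := hs₀.of_le_left hρ (by linarith) (by linarith)
    have hsep_s : WellSeparated ρ a (Q - s) z := hs₀.of_le_left hρ hs (by linarith)
    have hQt := hPt (by linarith)
    exact hQt.trans (hG.snd_le_snd_of_lt hρ hsep_t hsep_s (by linarith))
  have h := hspread (Q - y₀) (by linarith) (by rw [sub_sub_cancel])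
  rw [sub_sub_cancel, hq₀] at h
  linarith

theorem snd_eq_of_le (hG : IsMechanismSlice a ρ G) (hρ : 0 ≤ ρ) {y₀ z₀ y z : ℝ}
    (hs₀ : WellSeparated ρ a y₀ z₀) (hq₀ : (G y₀ z₀).2 = y₀) (hs : WellSeparated ρ a y z)
    (hy : y₀ ≤ y) : (G y z).2 = y := by
  set ε := (y₀ - a) / (ρ + 1)
  have hε : 0 < ε := div_pos (sub_pos.2 hs₀.1) (by linarith)
  have hρε : ρ * ε < y₀ - a := by
    have : ε * (ρ + 1) = y₀ - a := div_mul_cancel₀ _ (by linarith)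
    linarith
  have hsepε : ∀ y', y₀ ≤ y' → WellSeparated ρ a y' (y' + ε) := fun y' hy' =>
    ⟨hs₀.1.trans_le hy', by linarith, by rw [add_sub_cancel_left]; linarith⟩
  refine forall_ge_of_uniform_step (P := fun y => ∀ z, WellSeparated ρ a y z → (G y z).2 = y) hε
    (fun z hz => hG.snd_eq_of_separated hρ hs₀ hq₀ hz) ?_ y hy z hs
  intro t s ht hts hst hPt z hz
  have hq : (G s (t + ε)).2 = s :=
    hG.snd_eq_of_le_of_snd_eq hρ (hsepε t ht) (hPt _ (hsepε t ht)) hts hst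
  exact hG.snd_eq_of_separated hρ ((hsepε t ht).of_le_left hρ hts hst) hq hz

end IsMechanismSlice

def mechanismSlice (F : (Fin 3 → ℝ) → ℝ × ℝ) (x : Fin 3 → ℝ) (j k : Fin 3) (y z : ℝ) : ℝ × ℝ :=
  F (update (update x j y) k z)

section FinThree

variable {x : Fin 3 → ℝ} {i j k : Fin 3}

lemma update_update_apply_left (hij : i ≠ j) (hik : i ≠ k) (y z : ℝ) :
    update (update x j y) k z i = x i := by
  rw [update_of_ne hik, update_of_ne hij]

lemma update_update_apply_mid (hjk : j ≠ k) (y z : ℝ) : update (update x j y) k z j = y := by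
  rw [update_of_ne hjk, update_self]

lemma wellSep_update_update_iff (hij : i ≠ j) (hik : i ≠ k) (hjk : j ≠ k) (ρ y z : ℝ) :
    WellSep ρ (update (update x j y) k z) i j k ↔ WellSeparated ρ (x i) y z := by
  rw [WellSep, update_update_apply_left hij hik, update_update_apply_mid hjk, update_self]
  rfl

lemma scost_update_update (hij : i ≠ j) (hik : i ≠ k) (hjk : j ≠ k) (y z : ℝ) (p : ℝ × ℝ) :
    scost (update (update x j y) k z) p = fcost (x i) p + fcost y p + fcost z p := by
  rw [scost, Fin.sum_univ_three_of_ne _ hij hik hjk, update_update_apply_left hij hik,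
    update_update_apply_mid hjk, update_self]

lemma isMechanismSlice_mechanismSlice {F : (Fin 3 → ℝ) → ℝ × ℝ} {ρ : ℝ} (hρ : 0 ≤ ρ)
    (hord : Ordered F) (hsp : Strategyproof F) (happ : ApproxRatio F ρ)
    (hij : i ≠ j) (hik : i ≠ k) (hjk : j ≠ k) :
    IsMechanismSlice (x i) ρ (mechanismSlice F x j k) where
  ordered _ _ := hord _
  strategyproof_mid y z y' := by
    have h := hsp (update (update x j y) k z) j y'
    have hupd : update (update (update x j y) k z) j y' = update (update x j y') k z := by
      rw [update_comm hjk.symm, update_idem]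
    rwa [update_update_apply_mid hjk, hupd] at h
  strategyproof_right y z z' := by
    have h := hsp (update (update x j y) k z) k z'
    rwa [update_self, update_idem] at h
  approx y z p := by
    have h := happ.scost_le hρ (update (update x j y) k z) p
    rwa [scost_update_update hij hik hjk, scost_update_update hij hik hjk] at h

end FinThree

/-- Proposition `right_cover` (K = 2): if `x` is `(i|j,k)`-well-separated with the
rightmost facility at `x_j`, then for every `(i|j,k)`-well-separated instance
obtained by replacing `x_j, x_k` with `x'_j, x'_k` where `x_j ≤ x'_j`, the
rightmost facility is at `x'_j`. -/
theorem right_cover (F : (Fin 3 → ℝ) → ℝ × ℝ) (ρ : ℝ) (hρ : 1 ≤ ρ)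
    (hord : Ordered F) (hsp : Strategyproof F) (happ : ApproxRatio F ρ)
    (x : Fin 3 → ℝ) (i j k : Fin 3)
    (hij : i ≠ j) (hik : i ≠ k) (hjk : j ≠ k)
    (hws : WellSep ρ x i j k) (hF : (F x).2 = x j)
    (x'j x'k : ℝ)
    (hws' : WellSep ρ (Function.update (Function.update x j x'j) k x'k) i j k)
    (hle : x j ≤ x'j) :
    (F (Function.update (Function.update x j x'j) k x'k)).2 = x'j := by
  have hρ₀ : 0 ≤ ρ := zero_le_one.trans hρ
  have hG := isMechanismSlice_mechanismSlice hρ₀ hord hsp happ hij hik hjk (x := x)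
  have hx : mechanismSlice F x j k (x j) (x k) = F x := by
    rw [mechanismSlice, update_eq_self, update_eq_self]
  exact hG.snd_eq_of_le hρ₀ hws (hx ▸ hF)
    ((wellSep_update_update_iff hij hik hjk ρ x'j x'k).1 hws') hle
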